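/- arXiv:1011.1650 — 2 statements merged into one kernel-verified Lean document; each statement's English description precedes it below -/
import Mathlib

section
/- For every integer j with 0 ≤ j ≤ n and all real numbers α₁, α₂, α₃, τ, one has Σ_{i=0}^{j} binom(j,i)·(α₁+α₂+α₃+(n+j−1)τ;τ)_{n−j}·(α₃+(n−j)τ;τ)_{j−i}·(α₁+α₂+(j−1)τ;τ)_i = (α₁+α₂+α₃+(n−1)τ;τ)_n. -/
open Finset

/-- The shifted Pochhammer symbol `(x;τ)_i = x(x+τ)⋯(x+(i−1)τ)`. -/
noncomputable def poch (x τ : ℝ) (i : ℕ) : ℝ := ∏ k ∈ Finset.range i, (x + (k : ℝ) * τ)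

/-! The left side is `(α₁+α₂+α₃+(n+j−1)τ;τ)_{n−j}` times a Chu–Vandermonde sum which collapses to
`(α₁+α₂+α₃+(n−1)τ;τ)_j`, and these two factors are the first `j` and the last `n−j` factors of
`(α₁+α₂+α₃+(n−1)τ;τ)_n`. -/

lemma poch_zero (x τ : ℝ) : poch x τ 0 = 1 := by
  simp [poch]

lemma poch_succ (x τ : ℝ) (i : ℕ) : poch x τ (i + 1) = poch x τ i * (x + i * τ) :=
  prod_range_succ _ i

lemma poch_add (x τ : ℝ) (i k : ℕ) : poch x τ (i + k) = poch x τ i * poch (x + i * τ) τ k := by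
  simp only [poch, prod_range_add, Nat.cast_add, add_mul, add_assoc]

lemma sum_antidiagonal_choose_mul_poch (a b τ : ℝ) (j : ℕ) :
    ∑ ik ∈ antidiagonal j, (j.choose ik.1 : ℝ) * (poch a τ ik.1 * poch b τ ik.2) =
      poch (a + b) τ j := by
  induction j with
  | zero => simp [poch_zero]
  | succ j ih =>
    rw [sum_antidiagonal_choose_succ_mul (fun i k => poch a τ i * poch b τ k), poch_succ, ← ih,
      sum_mul, ← sum_add_distrib]
    refine sum_congr rfl fun ⟨i, k⟩ hik => ?_
    have hik : i + k = j := mem_antidiagonal.mp hik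
    -- the new last factor `a + b + jτ` splits as `(b + kτ) + (a + iτ)`
    have hsplit : a + b + (j : ℝ) * τ = (b + k * τ) + (a + i * τ) := by
      rw [← hik]; push_cast; ring
    rw [Nat.choose_symm_of_eq_add hik.symm, poch_succ, poch_succ, hsplit]
    ring

lemma sum_range_choose_mul_poch (a b τ : ℝ) (j : ℕ) :
    ∑ i ∈ range (j + 1), (j.choose i : ℝ) * poch a τ i * poch b τ (j - i) = poch (a + b) τ j := by
  simp only [mul_assoc, ← sum_antidiagonal_choose_mul_poch a b τ j,
    Nat.sum_antidiagonal_eq_sum_range_succ_mk]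

theorem stmt_9_general (n : ℕ) (j : ℕ) (hj : j ≤ n) (α₁ α₂ α₃ τ : ℝ) :
    ∑ i ∈ Finset.range (j + 1),
        (Nat.choose j i : ℝ) *
          poch (α₁ + α₂ + α₃ + ((n : ℝ) + j - 1) * τ) τ (n - j) *
          poch (α₃ + ((n : ℝ) - j) * τ) τ (j - i) *
          poch (α₁ + α₂ + ((j : ℝ) - 1) * τ) τ i =
      poch (α₁ + α₂ + α₃ + ((n : ℝ) - 1) * τ) τ n := by
  set x := α₁ + α₂ + α₃ + ((n : ℝ) - 1) * τ
  have hvandermonde :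
      ∑ i ∈ range (j + 1), (j.choose i : ℝ) * poch (α₁ + α₂ + ((j : ℝ) - 1) * τ) τ i *
        poch (α₃ + ((n : ℝ) - j) * τ) τ (j - i) = poch x τ j := by
    rw [sum_range_choose_mul_poch]
    congr 1
    ring
  have htail : α₁ + α₂ + α₃ + ((n : ℝ) + j - 1) * τ = x + j * τ := by ring
  have hsplit : poch x τ n = poch x τ j * poch (x + j * τ) τ (n - j) := by
    rw [← poch_add, Nat.add_sub_cancel' hj]
  rw [hsplit, ← hvandermonde, htail, sum_mul]
  refine sum_congr rfl fun i _ => ?_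
  ring

theorem stmt_9 (n : ℕ) (hn : 1 ≤ n) (j : ℕ) (hj : j ≤ n) (α₁ α₂ α₃ τ : ℝ) :
    ∑ i ∈ Finset.range (j + 1),
        (Nat.choose j i : ℝ) *
          poch (α₁ + α₂ + α₃ + ((n : ℝ) + j - 1) * τ) τ (n - j) *
          poch (α₃ + ((n : ℝ) - j) * τ) τ (j - i) *
          poch (α₁ + α₂ + ((j : ℝ) - 1) * τ) τ i =
      poch (α₁ + α₂ + α₃ + ((n : ℝ) - 1) * τ) τ n :=
  stmt_9_general n j hj α₁ α₂ α₃ τ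
end

section
/- Let i, j be integers with 0 ≤ i ≤ n−1, 0 ≤ j ≤ n−1 and n ≤ i+j+1. Then for all z ∈ ℝⁿ with pairwise distinct coordinates, Σ_{1≤k<l≤n} [2τ/(z_k−z_l)] · [ (x₁−z_k)(x₂−z_k)(x₃−z_k)·s^{(n−1)}_{i,j}(ẑ_k) − (x₁−z_l)(x₂−z_l)(x₃−z_l)·s^{(n−1)}_{i,j}(ẑ_l) ] = τ·[ (n−j+i−1)·s^{(n)}_{i+1,j+1}(z) + (n−i−1)·s^{(n)}_{i,j+1}(z) − (n−j−1)·(x₂−x₁)·s^{(n)}_{i+1,j}(z) ]. -/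
/-!
Write `s^{(m)}_{i,j}` as a symmetrised product `symProd` of one-variable slot factors: `m - i`
factors `(t - x₁)(x₂ - t)`, then `i + j - m` factors `(t - x₁)(x₃ - t)`, then `m - j` factors
`x₃ - t`. With `P(t) = (x₁ - t)(x₂ - t)(x₃ - t)`, each slot factor `f` has a companion `κ` with
`P(u) f(v) - P(v) f(u) = (u - v) (κ(u) f(v) + κ(v) f(u))`.

Placing the deleted variable `z_k` in an extra slot turns the left side into a sum over
permutations of `P(w₀) ∏_r f_r(w_{r+1}) / (w₀ - w_{r+1})`, `w = z ∘ σ`. Pairing `σ` with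
`σ ∘ (0 r+1)`, which exchanges `w₀` and `w_{r+1}`, clears the denominators and leaves the
symmetrised product with the extra slot factor `Σ_r κ_r`, a combination of the three kinds of
slot factors. Moving the new factor into its block yields the three symmetrisations on the right.
-/

open Finset

/-- `φ^{(m)}_{i,j}(w) = ∏_{l=1}^{j}(w_l−x₁) ∏_{l=1}^{m−i}(x₂−w_l) ∏_{l=m−i+1}^{m}(x₃−w_l)`. -/
noncomputable def phiM (m : ℕ) (x₁ x₂ x₃ : ℝ) (i j : ℕ) (w : Fin m → ℝ) : ℝ :=
  ∏ l : Fin m,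
    (if (l : ℕ) < j then (w l - x₁) else 1) *
      (if (l : ℕ) < m - i then (x₂ - w l) else (x₃ - w l))

/-- The symmetrization `s^{(m)}_{i,j}(w) = Σ_{σ ∈ S_m} φ^{(m)}_{i,j}(w_{σ(1)},…,w_{σ(m)})`. -/
noncomputable def sM (m : ℕ) (x₁ x₂ x₃ : ℝ) (i j : ℕ) (w : Fin m → ℝ) : ℝ :=
  ∑ σ : Equiv.Perm (Fin m), phiM m x₁ x₂ x₃ i j (w ∘ σ)

/-- `ẑ_k = (z₁,…,z_{k−1},z_{k+1},…,z_n)`, deletion of the `k`-th coordinate. -/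
def hat {n : ℕ} (z : Fin n → ℝ) (k : Fin n) (l : Fin (n - 1)) : ℝ :=
  if (l : ℕ) < (k : ℕ) then z ⟨(l : ℕ), by have := l.isLt; omega⟩
  else z ⟨(l : ℕ) + 1, by have := l.isLt; omega⟩

open Equiv

-- The diagonal terms on the right vanish because `x / 0 = 0`.
theorem sum_filter_lt_div_sub {ι K : Type*} [LinearOrder ι] [Fintype ι] [Field K] (X z : ι → K) :
    ∑ p ∈ univ.filter (fun p : ι × ι => p.1 < p.2), (X p.1 - X p.2) / (z p.1 - z p.2) =
      ∑ k, ∑ l, X k / (z k - z l) := by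
  rw [← Fintype.sum_prod_type', ← sum_filter_add_sum_filter_not univ (fun p : ι × ι => p.1 < p.2)]
  have hgt : ∑ p ∈ univ.filter (fun p : ι × ι => ¬ p.1 < p.2), X p.1 / (z p.1 - z p.2) =
      ∑ p ∈ univ.filter (fun p : ι × ι => p.1 < p.2), X p.2 / (z p.2 - z p.1) := by
    rw [← sum_subset (s₁ := univ.filter fun p : ι × ι => p.2 < p.1)
      (fun p hp => by simp only [mem_filter, mem_univ, true_and, not_lt] at hp ⊢; exact hp.le)
      (fun p hp hn => by
        simp only [mem_filter, mem_univ, true_and, not_lt] at hp hn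
        rw [le_antisymm hp hn, sub_self, div_zero])]
    exact sum_equiv (Equiv.prodComm ι ι) (by simp) (by simp)
  rw [hgt, ← sum_add_distrib]
  refine sum_congr rfl fun p _ => ?_
  rw [sub_div, ← neg_sub (z p.1), div_neg, sub_eq_add_neg]

theorem sum_eq_sum_of_add_comp_eq {α M : Type*} [Fintype α] [AddCommGroup M]
    [IsAddTorsionFree M] (e : α ≃ α) {g h : α → M} (hgh : ∀ x, g x + g (e x) = h x + h (e x)) :
    ∑ x, g x = ∑ x, h x := by
  have := congrArg (fun s : α → M => ∑ x, s x) (funext hgh)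
  simp only [sum_add_distrib, e.sum_comp, ← two_nsmul] at this
  exact nsmul_right_injective two_ne_zero this

theorem sum_perm_comp_eq_sum_cons {α β : Type*} [AddCommMonoid β] {N : ℕ}
    (F : (Fin (N + 1) → α) → β) (w : Fin (N + 1) → α) :
    ∑ σ : Perm (Fin (N + 1)), F (w ∘ σ) =
      ∑ k, ∑ π : Perm (Fin N), F (Fin.cons (w k) (w ∘ k.succAbove ∘ π)) := by
  rw [← Perm.decomposeFin.symm.sum_comp, Fintype.sum_prod_type]
  refine sum_congr rfl fun k _ => ?_
  -- `decomposeFin` lists the other variables as `swap 0 k ∘ succ`, not in the order `k.succAbove`.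
  obtain ⟨ρ, hρ⟩ : ∃ ρ : Perm (Fin N), ∀ r, swap 0 k r.succ = k.succAbove (ρ r) := by
    refine Fin.cases ⟨1, fun r => ?_⟩ (fun i => ⟨i.cycleRange, fun r => ?_⟩) k
    · simp
    · simp [Fin.succAbove_cycleRange]
  have hcomp : ∀ π : Perm (Fin N),
      w ∘ Perm.decomposeFin.symm (k, π) = Fin.cons (w k) (w ∘ k.succAbove ∘ ⇑(ρ * π)) := by
    intro π
    funext q
    refine Fin.cases ?_ (fun r => ?_) q <;> simp [hρ]
  simp only [hcomp]
  exact Equiv.sum_comp (Equiv.mulLeft ρ) (fun π => F (Fin.cons (w k) (w ∘ k.succAbove ∘ π)))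

def symProd {R : Type*} [CommSemiring R] {m : ℕ} (f : Fin m → R → R) (w : Fin m → R) : R :=
  ∑ σ : Perm (Fin m), ∏ r, f r (w (σ r))

section symProd

variable {R : Type*} [CommSemiring R]

theorem symProd_comp_perm {m : ℕ} (f : Fin m → R → R) (ρ : Perm (Fin m)) (w : Fin m → R) :
    symProd (f ∘ ρ) w = symProd f w := by
  unfold symProd
  rw [← Equiv.sum_comp (Equiv.mulRight ρ)]
  exact sum_congr rfl fun σ _ => Fintype.prod_equiv ρ _ _ fun r => rfl

theorem symProd_cons {N : ℕ} (φ : R → R) (f : Fin N → R → R) (w : Fin (N + 1) → R) :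
    symProd (Fin.cons φ f) w = ∑ k, φ (w k) * symProd f (w ∘ k.succAbove) := by
  have := sum_perm_comp_eq_sum_cons (fun v => ∏ r, (Fin.cons φ f : Fin (N + 1) → R → R) r (v r)) w
  simp only [Fin.prod_univ_succ, Fin.cons_zero, Fin.cons_succ, Function.comp_apply] at this
  simp only [symProd, Fin.prod_univ_succ, Fin.cons_zero, Fin.cons_succ, this, mul_sum]
  rfl

theorem symProd_insertNth {N : ℕ} (p : Fin (N + 1)) (φ : R → R) (f : Fin N → R → R)
    (w : Fin (N + 1) → R) : symProd (p.insertNth φ f) w = symProd (Fin.cons φ f) w := by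
  rw [← Fin.cons_comp_cycleRange, symProd_comp_perm]

end symProd

theorem prod_succ_comp_swap {α M : Type*} [CommMonoid M] {N : ℕ} (f : Fin N → α → M)
    (v : Fin (N + 1) → α) (r : Fin N) :
    ∏ q, f q ((v ∘ swap 0 r.succ) q.succ) = f r (v 0) * ∏ q ∈ univ.erase r, f q (v q.succ) := by
  rw [← mul_prod_erase _ _ (mem_univ r)]
  refine congrArg₂ _ (by simp) (prod_congr rfl fun q hq => ?_)
  rw [Function.comp_apply, swap_apply_of_ne_of_ne (Fin.succ_ne_zero q)
    (Fin.succ_injective _ |>.ne (ne_of_mem_erase hq))]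

theorem sum_sum_div_sub_symProd {K : Type*} [Field K] [CharZero K] {N : ℕ} (P : K → K)
    (f κ : Fin N → K → K)
    (hfκ : ∀ r u v, P u * f r v - P v * f r u = (u - v) * (κ r u * f r v + κ r v * f r u))
    {z : Fin (N + 1) → K} (hz : Function.Injective z) :
    ∑ k, ∑ l, P (z k) * symProd f (z ∘ k.succAbove) / (z k - z l) =
      symProd (Fin.cons (fun t => ∑ r, κ r t) f) z := by
  have hpair : ∀ r : Fin N, ∑ σ : Perm (Fin (N + 1)),
      P (z (σ 0)) * (∏ q, f q (z (σ q.succ))) / (z (σ 0) - z (σ r.succ)) =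
      ∑ σ : Perm (Fin (N + 1)), κ r (z (σ 0)) * ∏ q, f q (z (σ q.succ)) := by
    intro r
    -- `σ ↦ σ * swap 0 r.succ` exchanges `z (σ 0)` and `z (σ r.succ)`, so paired terms combine
    -- into a divided difference of `P`, which `hfκ` evaluates.
    refine sum_eq_sum_of_add_comp_eq (Equiv.mulRight (swap 0 r.succ)) fun σ => ?_
    have hne : z (σ 0) - z (σ r.succ) ≠ 0 :=
      sub_ne_zero.2 (hz.ne (σ.injective.ne (Fin.succ_ne_zero r).symm))
    have := prod_succ_comp_swap f (z ∘ σ) r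
    simp only [Function.comp_apply] at this
    simp only [coe_mulRight, Perm.coe_mul, Function.comp_apply, swap_apply_left, swap_apply_right,
      this, ← mul_prod_erase univ (fun q => f q (z (σ q.succ))) (mem_univ r)]
    rw [← neg_sub (z (σ 0)), div_neg, ← sub_eq_add_neg, ← sub_div, div_eq_iff hne]
    linear_combination (∏ q ∈ univ.erase r, f q (z (σ q.succ))) * hfκ r (z (σ 0)) (z (σ r.succ))
  calc ∑ k, ∑ l, P (z k) * symProd f (z ∘ k.succAbove) / (z k - z l)
      = ∑ σ : Perm (Fin (N + 1)), ∑ r : Fin N,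
          P (z (σ 0)) * (∏ q, f q (z (σ q.succ))) / (z (σ 0) - z (σ r.succ)) := by
        have := sum_perm_comp_eq_sum_cons
          (fun v => ∑ r : Fin N, P (v 0) * (∏ q, f q (v q.succ)) / (v 0 - v r.succ)) z
        simp only [Function.comp_apply, Fin.cons_zero, Fin.cons_succ] at this
        rw [this]
        refine sum_congr rfl fun k _ => ?_
        rw [Fin.sum_univ_succAbove _ k, sub_self, div_zero, zero_add]
        simp only [symProd, Function.comp_apply, mul_sum, sum_div]
        rw [sum_comm]
        exact sum_congr rfl fun π _ => (Equiv.sum_comp π _).symm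
    _ = ∑ r : Fin N, ∑ σ : Perm (Fin (N + 1)), κ r (z (σ 0)) * ∏ q, f q (z (σ q.succ)) := by
        rw [sum_comm]
        exact sum_congr rfl fun r _ => hpair r
    _ = symProd (Fin.cons (fun t => ∑ r, κ r t) f) z := by
        rw [sum_comm]
        simp only [symProd, Fin.prod_univ_succ, Fin.cons_zero, Fin.cons_succ, sum_mul]

def threeBlock {α : Type*} (a b : ℕ) (x y w : α) (r : ℕ) : α :=
  if r < a then x else if r < a + b then y else w

theorem sum_threeBlock {M : Type*} [AddCommMonoid M] {a b c N : ℕ} (h : a + b + c = N)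
    (x y w : M) : ∑ r : Fin N, threeBlock a b x y w r = a • x + b • y + c • w := by
  subst h
  rw [Fin.sum_univ_eq_sum_range (fun r => threeBlock a b x y w r), sum_range_add, sum_range_add]
  have hx : ∀ r ∈ range a, threeBlock a b x y w r = x := fun r hr => if_pos (mem_range.1 hr)
  have hy : ∀ r ∈ range b, threeBlock a b x y w (a + r) = y := fun r hr => by
    simp only [threeBlock, mem_range] at hr ⊢
    rw [if_neg (by omega), if_pos (by omega)]
  have hw : ∀ r ∈ range c, threeBlock a b x y w (a + b + r) = w := fun r _ => by
    simp only [threeBlock]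
    rw [if_neg (by omega), if_neg (by omega)]
  simp only [sum_congr rfl hx, sum_congr rfl hy, sum_congr rfl hw, sum_const, card_range]

theorem insertNth_eq_of_shift {α : Type*} {N e : ℕ} (he : e ≤ N) {g g' : ℕ → α}
    (hlt : ∀ r < e, g' r = g r) (hge : ∀ r, e ≤ r → g' (r + 1) = g r) :
    (⟨e, Nat.lt_succ_of_le he⟩ : Fin (N + 1)).insertNth (g' e) (fun r : Fin N => g r) =
      fun r : Fin (N + 1) => g' r := by
  rw [Fin.insertNth_eq_iff]
  refine ⟨rfl, funext fun r => ?_⟩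
  simp only [Fin.removeNth, Fin.succAbove, Fin.lt_def, Fin.val_castSucc]
  split_ifs with h
  · exact (hlt r h).symm
  · exact (hge r (not_lt.1 h)).symm

theorem symProd_eq_sum_of_shift {R : Type*} [CommSemiring R] {N e : ℕ} (he : e ≤ N)
    {g g' : ℕ → R → R} (hlt : ∀ r < e, g' r = g r) (hge : ∀ r, e ≤ r → g' (r + 1) = g r)
    (w : Fin (N + 1) → R) :
    symProd (fun r : Fin (N + 1) => g' r) w =
      ∑ k, g' e (w k) * symProd (fun r : Fin N => g r) (w ∘ k.succAbove) := by
  rw [← insertNth_eq_of_shift he hlt hge, symProd_insertNth, symProd_cons]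

section slots

variable (x₁ x₂ x₃ : ℝ)

noncomputable def slotFun (a b r : ℕ) : ℝ → ℝ :=
  threeBlock a b (fun t => (t - x₁) * (x₂ - t)) (fun t => (t - x₁) * (x₃ - t)) (fun t => x₃ - t) r

noncomputable def slotCoeff (a b r : ℕ) : ℝ → ℝ :=
  threeBlock a b (fun t => (t - x₁) * (x₂ - t) / 2) (fun t => (t - x₁) * (x₃ - t) / 2)
    (fun t => (t - x₁) * (x₃ - t) - (x₂ - x₁) / 2 * (x₃ - t)) r

theorem cubic_mul_slotFun_sub (a b r : ℕ) (u v : ℝ) :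
    (x₁ - u) * (x₂ - u) * (x₃ - u) * slotFun x₁ x₂ x₃ a b r v -
        (x₁ - v) * (x₂ - v) * (x₃ - v) * slotFun x₁ x₂ x₃ a b r u =
      (u - v) * (slotCoeff x₁ x₂ x₃ a b r u * slotFun x₁ x₂ x₃ a b r v +
        slotCoeff x₁ x₂ x₃ a b r v * slotFun x₁ x₂ x₃ a b r u) := by
  simp only [slotFun, slotCoeff, threeBlock]
  split_ifs <;> ring

theorem sum_slotCoeff {a b c N : ℕ} (h : a + b + c = N) (t : ℝ) :
    ∑ r : Fin N, slotCoeff x₁ x₂ x₃ a b r t =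
      a * ((t - x₁) * (x₂ - t) / 2) + b * ((t - x₁) * (x₃ - t) / 2) +
        c * ((t - x₁) * (x₃ - t) - (x₂ - x₁) / 2 * (x₃ - t)) := by
  simp only [slotCoeff]
  rw [← Finset.sum_apply, sum_threeBlock h]
  simp only [Pi.add_apply, nsmul_eq_mul, Pi.mul_apply, Pi.natCast_apply]

theorem sM_eq_symProd {m i j a b : ℕ} (ha : m - i = a) (hb : j = a + b) :
    sM m x₁ x₂ x₃ i j = symProd (fun r : Fin m => slotFun x₁ x₂ x₃ a b r) := by
  funext w
  refine sum_congr rfl fun σ _ => prod_congr rfl fun r _ => ?_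
  simp only [slotFun, threeBlock, Function.comp_apply]
  split_ifs <;> first | omega | ring

variable {a b c : ℕ} (w : Fin (a + b + c + 1) → ℝ)

theorem sM_laplace_left :
    sM (a + b + c + 1) x₁ x₂ x₃ (b + c) (a + b + 1) w =
      ∑ k, (w k - x₁) * (x₂ - w k) *
        symProd (fun r : Fin (a + b + c) => slotFun x₁ x₂ x₃ a b r) (w ∘ k.succAbove) := by
  rw [sM_eq_symProd x₁ x₂ x₃ (a := a + 1) (b := b) (by omega) (by omega),
    symProd_eq_sum_of_shift (g := slotFun x₁ x₂ x₃ a b) (e := a) (by omega) (fun r hr => ?_)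
      (fun r hr => ?_)]
  · simp [slotFun, threeBlock]
  all_goals simp only [slotFun, threeBlock]; split_ifs <;> first | rfl | omega

theorem sM_laplace_mid :
    sM (a + b + c + 1) x₁ x₂ x₃ (b + c + 1) (a + b + 1) w =
      ∑ k, (w k - x₁) * (x₃ - w k) *
        symProd (fun r : Fin (a + b + c) => slotFun x₁ x₂ x₃ a b r) (w ∘ k.succAbove) := by
  rw [sM_eq_symProd x₁ x₂ x₃ (a := a) (b := b + 1) (by omega) (by omega),
    symProd_eq_sum_of_shift (g := slotFun x₁ x₂ x₃ a b) (e := a + b) (by omega) (fun r hr => ?_)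
      (fun r hr => ?_)]
  · simp [slotFun, threeBlock]
  all_goals simp only [slotFun, threeBlock]; split_ifs <;> first | rfl | omega

theorem sM_laplace_right :
    sM (a + b + c + 1) x₁ x₂ x₃ (b + c + 1) (a + b) w =
      ∑ k, (x₃ - w k) *
        symProd (fun r : Fin (a + b + c) => slotFun x₁ x₂ x₃ a b r) (w ∘ k.succAbove) := by
  rw [sM_eq_symProd x₁ x₂ x₃ (a := a) (b := b) (by omega) rfl,
    symProd_eq_sum_of_shift (g := slotFun x₁ x₂ x₃ a b) (e := a + b + c) le_rfl (fun r _ => rfl)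
      (fun r hr => ?_)]
  · simp [slotFun, threeBlock, show ¬ a + b + c < a by omega, show ¬ a + b + c < a + b by omega]
  simp only [slotFun, threeBlock]; split_ifs <;> first | rfl | omega

end slots

theorem hat_eq_comp_succAbove {N : ℕ} (z : Fin (N + 1) → ℝ) (k : Fin (N + 1)) :
    hat z k = z ∘ k.succAbove := by
  funext l
  simp only [hat, Function.comp_apply, Fin.succAbove, Fin.lt_def, Fin.val_castSucc]
  split_ifs <;> rfl

theorem stmt_19_general (n : ℕ) (hn : 2 ≤ n) (x₁ x₂ x₃ τ : ℝ)
    (i j : ℕ) (hi : i ≤ n - 1) (hj : j ≤ n - 1) (hij : n ≤ i + j + 1)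
    (z : Fin n → ℝ) (hz : ∀ k l : Fin n, k ≠ l → z k ≠ z l) :
    ∑ p ∈ Finset.univ.filter (fun p : Fin n × Fin n => p.1 < p.2),
        2 * τ / (z p.1 - z p.2) *
          ((x₁ - z p.1) * (x₂ - z p.1) * (x₃ - z p.1) *
              sM (n - 1) x₁ x₂ x₃ i j (hat z p.1) -
            (x₁ - z p.2) * (x₂ - z p.2) * (x₃ - z p.2) *
              sM (n - 1) x₁ x₂ x₃ i j (hat z p.2)) =
      τ * (((n : ℝ) - j + i - 1) * sM n x₁ x₂ x₃ (i + 1) (j + 1) z +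
          ((n : ℝ) - i - 1) * sM n x₁ x₂ x₃ i (j + 1) z -
          ((n : ℝ) - j - 1) * (x₂ - x₁) * sM n x₁ x₂ x₃ (i + 1) j z) := by
  obtain ⟨a, b, c, rfl, rfl, rfl⟩ : ∃ a b c, n = a + b + c + 1 ∧ i = b + c ∧ j = a + b :=
    ⟨n - 1 - i, i + j + 1 - n, n - 1 - j, by omega, by omega, by omega⟩
  set f : Fin (a + b + c) → ℝ → ℝ := fun r => slotFun x₁ x₂ x₃ a b r
  have hS : ∀ k, sM (a + b + c + 1 - 1) x₁ x₂ x₃ (b + c) (a + b) (hat z k) =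
      symProd f (z ∘ k.succAbove) := fun k => by
    rw [hat_eq_comp_succAbove]
    exact congrFun (sM_eq_symProd x₁ x₂ x₃ (by omega) rfl) _
  have key := sum_sum_div_sub_symProd (fun t => (x₁ - t) * (x₂ - t) * (x₃ - t)) f
    (fun r => slotCoeff x₁ x₂ x₃ a b r) (fun r => cubic_mul_slotFun_sub x₁ x₂ x₃ a b r)
    (fun k l h => not_imp_not.1 (hz k l) h)
  rw [← sum_filter_lt_div_sub] at key
  simp only [sum_slotCoeff x₁ x₂ x₃ rfl, symProd_cons] at key
  have key2 := congrArg (2 * τ * ·) key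
  simp only [mul_sum] at key2
  simp only [hS, sM_laplace_left, sM_laplace_mid, sM_laplace_right]
  refine (sum_congr rfl fun p _ => ?_).trans (key2.trans ?_)
  · ring
  · simp only [mul_sum, ← sum_add_distrib, ← sum_sub_distrib]
    refine sum_congr rfl fun k _ => ?_
    push_cast
    ring

theorem stmt_19 (n : ℕ) (hn : 2 ≤ n) (x₁ x₂ x₃ α₁ α₂ α₃ τ : ℝ)
    (i j : ℕ) (hi : i ≤ n - 1) (hj : j ≤ n - 1) (hij : n ≤ i + j + 1)
    (z : Fin n → ℝ) (hz : ∀ k l : Fin n, k ≠ l → z k ≠ z l) :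
    ∑ p ∈ Finset.univ.filter (fun p : Fin n × Fin n => p.1 < p.2),
        2 * τ / (z p.1 - z p.2) *
          ((x₁ - z p.1) * (x₂ - z p.1) * (x₃ - z p.1) *
              sM (n - 1) x₁ x₂ x₃ i j (hat z p.1) -
            (x₁ - z p.2) * (x₂ - z p.2) * (x₃ - z p.2) *
              sM (n - 1) x₁ x₂ x₃ i j (hat z p.2)) =
      τ * (((n : ℝ) - j + i - 1) * sM n x₁ x₂ x₃ (i + 1) (j + 1) z +
          ((n : ℝ) - i - 1) * sM n x₁ x₂ x₃ i (j + 1) z -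
          ((n : ℝ) - j - 1) * (x₂ - x₁) * sM n x₁ x₂ x₃ (i + 1) j z) :=
  stmt_19_general n hn x₁ x₂ x₃ τ i j hi hj hij z hz
end
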